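/- For every n ∈ ℕ there exists a positive constant C (depending only on n) such that the following holds: for every real Hilbert space H, every bounded nonnegative selfadjoint operator A : H →L[ℝ] H, and every solution u of u'' + A u + u' = 0 with data (u0,u1), the n-th time derivative u⁽ⁿ⁾ satisfies ‖u⁽ⁿ⁾(t)‖² + (1+t) E(u⁽ⁿ⁾;t) ≤ C (1+t)^{−2n} ‖(u0,u1)‖_{D(Lⁿ)}² for all t ≥ 0. -/

import Mathlib

/-
Write the equation as `W' = L W` for `W = (u, u')`. The energy `E = ‖u'‖² + ⟪A u, u⟫` and the
square `G = ‖W‖_H²` of the energy norm satisfy `E' = -2‖u'‖²` and `G' = -E`, so `t E + G` is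
nonincreasing; this gives the case `n = 0`. The same two identities for `W` and for `L W` make an
explicit cubic-in-`t` combination of them nonincreasing, which gains the factor `(1 + t)⁻²` for one
time derivative. The general case is an induction on `n`: run the one-derivative estimate for
`Lⁿ W` from time `t / 2` to `t`, bounding its data at `t / 2` by the induction hypothesis applied
to `W` and to `L W`.
-/

open scoped RealInnerProductSpace
open Set

universe u

noncomputable section

namespace DampedWave

variable {H : Type*} [NormedAddCommGroup H] [InnerProductSpace ℝ H] {A : H →L[ℝ] H}

def L (A : H →L[ℝ] H) : H × H →L[ℝ] H × H :=
  (ContinuousLinearMap.snd ℝ H H).prod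
    (-(A.comp (ContinuousLinearMap.fst ℝ H H)) - ContinuousLinearMap.snd ℝ H H)

lemma coe_L : ⇑(L A) = fun p : H × H => (p.2, -A p.1 - p.2) := rfl

lemma L_pow_succ_apply (n : ℕ) (p : H × H) : (L A ^ (n + 1)) p = L A ((L A ^ n) p) := by
  rw [pow_succ', mul_apply_eq_comp]

lemma L_pow_succ_apply' (n : ℕ) (p : H × H) : (L A ^ (n + 1)) p = (L A ^ n) (L A p) := by
  rw [pow_succ, mul_apply_eq_comp]

def energy (A : H →L[ℝ] H) (p : H × H) : ℝ := ‖p.2‖ ^ 2 + ⟪A p.1, p.1⟫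

def energyNormSq (A : H →L[ℝ] H) (p : H × H) : ℝ :=
  ⟪A p.1, p.1⟫ + (1 / 4) * ‖p.1‖ ^ 2 + ‖p.2 + (1 / 2 : ℝ) • p.1‖ ^ 2

def weightedEnergy (A : H →L[ℝ] H) (t : ℝ) (p : H × H) : ℝ := ‖p.1‖ ^ 2 + (1 + t) * energy A p

def graphNormSq (A : H →L[ℝ] H) (n : ℕ) (p : H × H) : ℝ :=
  ∑ k ∈ Finset.range (n + 1), energyNormSq A ((L A ^ k) p)

lemma energyNormSq_eq (p : H × H) :
    energyNormSq A p = ⟪A p.1, p.1⟫ + ‖p.2‖ ^ 2 + ⟪p.1, p.2⟫ + (1 / 2) * ‖p.1‖ ^ 2 := by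
  rw [energyNormSq, norm_add_sq_real, norm_smul, real_inner_smul_right, real_inner_comm p.1 p.2]
  norm_num
  ring

section Nonneg

variable (hpos : ∀ x : H, 0 ≤ ⟪A x, x⟫) (p : H × H)
include hpos

lemma energy_nonneg : 0 ≤ energy A p := add_nonneg (sq_nonneg _) (hpos _)

lemma energyNormSq_nonneg : 0 ≤ energyNormSq A p := by
  have := hpos p.1
  unfold energyNormSq
  positivity

lemma sq_norm_fst_le_energyNormSq : ‖p.1‖ ^ 2 ≤ 4 * energyNormSq A p := by
  have := hpos p.1
  unfold energyNormSq
  nlinarith [sq_nonneg ‖p.2 + (1 / 2 : ℝ) • p.1‖]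

lemma energy_le_energyNormSq : energy A p ≤ 2 * energyNormSq A p := by
  rw [energy, energyNormSq_eq]
  nlinarith [hpos p.1, norm_add_sq_real p.1 p.2]

lemma energyNormSq_le_energy : energyNormSq A p ≤ 2 * energy A p + ‖p.1‖ ^ 2 := by
  rw [energy, energyNormSq_eq]
  nlinarith [hpos p.1, norm_sub_sq_real p.1 p.2, sq_nonneg ‖p.1 - p.2‖]

lemma energyNormSq_le_two_mul_weightedEnergy {t : ℝ} (ht : 0 ≤ t) :
    energyNormSq A p ≤ 2 * weightedEnergy A t p := by
  have := mul_nonneg ht (energy_nonneg hpos p)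
  rw [weightedEnergy]
  nlinarith [energyNormSq_le_energy hpos p, sq_nonneg ‖p.1‖]

lemma graphNormSq_le_succ (n : ℕ) : graphNormSq A n p ≤ graphNormSq A (n + 1) p := by
  rw [graphNormSq, graphNormSq, Finset.sum_range_succ _ (n + 1)]
  linarith [energyNormSq_nonneg hpos ((L A ^ (n + 1)) p)]

lemma graphNormSq_L_le (n : ℕ) : graphNormSq A n (L A p) ≤ graphNormSq A (n + 1) p := by
  rw [graphNormSq, graphNormSq, Finset.sum_range_succ' _ (n + 1)]
  simp only [L_pow_succ_apply']
  linarith [energyNormSq_nonneg hpos ((L A ^ 0) p)]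

end Nonneg

lemma weightedEnergy_le_of_eq_or_eq_zero (hpos : ∀ x : H, 0 ≤ ⟪A x, x⟫) {t : ℝ} (ht : 0 ≤ t)
    {p q : H × H} (h₁ : p.1 = q.1 ∨ p.1 = 0) (h₂ : p.2 = q.2 ∨ p.2 = 0) :
    weightedEnergy A t p ≤ weightedEnergy A t q := by
  obtain ⟨x, y⟩ := p
  have := hpos q.1
  rcases h₁ with rfl | rfl <;> rcases h₂ with rfl | rfl <;>
    simp only [weightedEnergy, energy, map_zero, inner_zero_left, norm_zero] <;>
    nlinarith [sq_nonneg ‖q.1‖, sq_nonneg ‖q.2‖]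

lemma apply_le_apply_zero_of_hasDerivAt {F F' : ℝ → ℝ} (hF : ∀ t ≥ 0, HasDerivAt F (F' t) t)
    (hF' : ∀ t ≥ 0, F' t ≤ 0) {t : ℝ} (ht : 0 ≤ t) : F t ≤ F 0 := by
  refine antitoneOn_of_hasDerivWithinAt_nonpos (f' := F') (convex_Ici 0)
    (fun x hx => (hF x hx).continuousAt.continuousWithinAt) (fun x hx => ?_) (fun x hx => ?_)
    self_mem_Ici ht ht
  all_goals rw [interior_Ici] at hx
  exacts [(hF x hx.le).hasDerivWithinAt, hF' x hx.le]

lemma deriv_eq_of_eqOn_Ioi {E : Type*} [NormedAddCommGroup E] [NormedSpace ℝ E] {f g : ℝ → E}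
    {g' : E} {a : ℝ} (hf : DifferentiableAt ℝ f a) (hg : HasDerivAt g g' a)
    (hfg : EqOn f g (Ioi a)) : deriv f a = g' := by
  have hval : f a = g a := tendsto_nhds_unique (hf.continuousAt.continuousWithinAt (s := Ioi a))
    (hg.continuousAt.continuousWithinAt.congr' (eventuallyEq_nhdsWithin_of_eqOn hfg).symm)
  exact (uniqueDiffWithinAt_Ioi a).eq_deriv _ hf.hasDerivAt.hasDerivWithinAt
    (hg.hasDerivWithinAt.congr hfg hval)

section Lyapunov

variable {e g p e₁ g₁ p₁ : ℝ → ℝ}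
  (he : ∀ t ≥ 0, HasDerivAt e (-2 * p t) t) (hg : ∀ t ≥ 0, HasDerivAt g (-e t) t)
include he hg

lemma mul_add_le_of_hasDerivAt (hp : ∀ t, 0 ≤ p t) {t : ℝ} (ht : 0 ≤ t) :
    t * e t + g t ≤ g 0 := by
  have key := apply_le_apply_zero_of_hasDerivAt (F := fun τ => τ * e τ + g τ)
    (fun τ hτ => ((hasDerivAt_id τ).mul (he τ hτ)).add (hg τ hτ))
    (fun τ hτ => by simp only [id_eq]; nlinarith [hp τ]) ht
  simpa using key

lemma cube_mul_add_le_of_hasDerivAt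
    (he₁ : ∀ t ≥ 0, HasDerivAt e₁ (-2 * p₁ t) t) (hg₁ : ∀ t ≥ 0, HasDerivAt g₁ (-e₁ t) t)
    (hp₁ : ∀ t, 0 ≤ p₁ t) (he_nonneg : ∀ t, 0 ≤ e t) (hg_nonneg : ∀ t, 0 ≤ g t)
    (hg₁_nonneg : ∀ t, 0 ≤ g₁ t) (hg₁_le : ∀ t, g₁ t ≤ 2 * e₁ t + p t) {t : ℝ} (ht : 0 ≤ t) :
    t ^ 3 * e₁ t + 3 * t ^ 2 * g₁ t + 24 * g₁ t ≤ 24 * g₁ 0 + 6 * e 0 + 3 * g 0 := by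
  -- the derivative of this functional is `-2 t³ p₁ + (6 t + 12) (g₁ - 2 e₁ - p)`
  have key := apply_le_apply_zero_of_hasDerivAt
    (F := fun τ => τ ^ 3 * e₁ τ + 3 * τ ^ 2 * g₁ τ + 12 * τ * g₁ τ + 24 * g₁ τ + 6 * e τ
      + 3 * τ * e τ + 3 * g τ)
    (fun τ hτ => ((((((((hasDerivAt_pow 3 τ).mul (he₁ τ hτ)).add
      (((hasDerivAt_pow 2 τ).const_mul 3).mul (hg₁ τ hτ))).add
      (((hasDerivAt_id τ).const_mul 12).mul (hg₁ τ hτ))).add ((hg₁ τ hτ).const_mul 24)).add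
      ((he τ hτ).const_mul 6)).add (((hasDerivAt_id τ).const_mul 3).mul (he τ hτ))).add
      ((hg τ hτ).const_mul 3)))
    (fun τ hτ => by
      have h₁ : 0 ≤ τ ^ 3 * p₁ τ := mul_nonneg (pow_nonneg hτ 3) (hp₁ τ)
      have h₂ : (6 * τ + 12) * (g₁ τ - 2 * e₁ τ - p τ) ≤ 0 :=
        mul_nonpos_of_nonneg_of_nonpos (by linarith) (by linarith [hg₁_le τ])
      simp only [id_eq]
      push_cast
      nlinarith) ht
  simp only [ne_eq, OfNat.ofNat_ne_zero, not_false_eq_true, zero_pow, zero_mul, mul_zero,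
    zero_add] at key
  nlinarith [mul_nonneg ht (hg₁_nonneg t), mul_nonneg ht (he_nonneg t), he_nonneg t, hg_nonneg t]

end Lyapunov

def IsSolution (A : H →L[ℝ] H) (W : ℝ → H × H) : Prop := ∀ t ≥ 0, HasDerivAt W (L A (W t)) t

lemma isSolution_of_contDiff {u : ℝ → H} (hu : ContDiff ℝ 2 u)
    (heq : ∀ t ≥ 0, deriv (deriv u) t + A (u t) + deriv u t = 0) :
    IsSolution A (fun t => (u t, deriv u t)) := fun t ht => by
  have hu' : ContDiff ℝ 1 (deriv u) := ((contDiff_succ_iff_deriv (n := 1)).mp hu).2.2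
  have hd := (hu.differentiable (by norm_num) t).hasDerivAt.prodMk
    (hu'.differentiable (by norm_num) t).hasDerivAt
  refine hd.congr_deriv (Prod.ext rfl ?_)
  show deriv (deriv u) t = -A (u t) - deriv u t
  linear_combination (norm := module) heq t ht

namespace IsSolution

variable {W : ℝ → H × H} (hW : IsSolution A W)
include hW

lemma map_pow (k : ℕ) : IsSolution A (fun t => (L A ^ k) (W t)) := fun t ht => by
  have h := (L A ^ k).hasFDerivAt.comp_hasDerivAt t (hW t ht)
  rwa [← L_pow_succ_apply', L_pow_succ_apply] at h

lemma map_L : IsSolution A (fun t => L A (W t)) := by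
  simpa using hW.map_pow 1

lemma comp_const_add {s : ℝ} (hs : 0 ≤ s) : IsSolution A (fun t => W (s + t)) :=
  fun t ht => (hW (s + t) (by positivity)).comp_const_add s t

lemma hasDerivAt_fst {t : ℝ} (ht : 0 ≤ t) : HasDerivAt (fun τ => (W τ).1) (W t).2 t :=
  (hW t ht).fst

lemma hasDerivAt_snd {t : ℝ} (ht : 0 ≤ t) :
    HasDerivAt (fun τ => (W τ).2) (-A (W t).1 - (W t).2) t :=
  (hW t ht).snd

lemma iteratedDeriv_fst_of_pos (k : ℕ) {t : ℝ} (ht : 0 < t) :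
    iteratedDeriv k (fun τ => (W τ).1) t = ((L A ^ k) (W t)).1 := by
  induction k generalizing t with
  | zero => simp
  | succ k ih =>
    have hk : iteratedDeriv k (fun τ => (W τ).1) =ᶠ[nhds t] fun τ => ((L A ^ k) (W τ)).1 := by
      filter_upwards [Ioi_mem_nhds ht] with τ hτ using ih hτ
    rw [iteratedDeriv_succ, hk.deriv_eq, ((hW.map_pow k).hasDerivAt_fst ht.le).deriv,
      L_pow_succ_apply]
    rfl

/-- At `t = 0` the equation only controls one-sided derivatives; a two-sided derivative that
does not exist takes the junk value `0`. -/
lemma iteratedDeriv_fst_eq_or {k : ℕ} {t : ℝ} (ht : 0 ≤ t) :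
    iteratedDeriv k (fun τ => (W τ).1) t = ((L A ^ k) (W t)).1 ∨
      iteratedDeriv k (fun τ => (W τ).1) t = 0 := by
  rcases ht.lt_or_eq with ht | rfl
  · exact .inl (hW.iteratedDeriv_fst_of_pos k ht)
  cases k with
  | zero => simp
  | succ k =>
    rw [iteratedDeriv_succ, L_pow_succ_apply]
    by_cases hd : DifferentiableAt ℝ (iteratedDeriv k fun τ => (W τ).1) 0
    · exact .inl (deriv_eq_of_eqOn_Ioi hd ((hW.map_pow k).hasDerivAt_fst le_rfl)
        fun τ hτ => hW.iteratedDeriv_fst_of_pos k hτ)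
    · exact .inr (deriv_zero_of_not_differentiableAt hd)

variable (hA : (A : H →ₗ[ℝ] H).IsSymmetric)
include hA

lemma hasDerivAt_energy {t : ℝ} (ht : 0 ≤ t) :
    HasDerivAt (fun τ => energy A (W τ)) (-2 * ‖(W t).2‖ ^ 2) t := by
  have hx := hW.hasDerivAt_fst ht
  have h := (hW.hasDerivAt_snd ht).norm_sq.add ((A.hasFDerivAt.comp_hasDerivAt t hx).inner ℝ hx)
  refine h.congr_deriv ?_
  have hsym : ⟪A (W t).2, (W t).1⟫ = ⟪(W t).2, A (W t).1⟫ := hA _ _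
  simp only [Function.comp_apply, inner_sub_right, inner_neg_right]
  rw [hsym, real_inner_comm (A (W t).1), ← real_inner_self_eq_norm_sq]
  ring

lemma hasDerivAt_energyNormSq {t : ℝ} (ht : 0 ≤ t) :
    HasDerivAt (fun τ => energyNormSq A (W τ)) (-energy A (W t)) t := by
  have hx := hW.hasDerivAt_fst ht
  have hy := hW.hasDerivAt_snd ht
  have h := ((((A.hasFDerivAt.comp_hasDerivAt t hx).inner ℝ hx).add hy.norm_sq).add
    (hx.inner ℝ hy)).add (hx.norm_sq.const_mul (1 / 2))
  rw [show (fun τ => energyNormSq A (W τ)) = _ from funext fun τ => energyNormSq_eq (W τ)]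
  refine h.congr_deriv ?_
  have hsym : ⟪A (W t).2, (W t).1⟫ = ⟪(W t).2, A (W t).1⟫ := hA _ _
  simp only [energy, Function.comp_apply, inner_sub_right, inner_neg_right]
  rw [hsym, real_inner_comm (A (W t).1) (W t).2, real_inner_comm (A (W t).1) (W t).1,
    ← real_inner_self_eq_norm_sq]
  ring

variable (hpos : ∀ x : H, 0 ≤ ⟪A x, x⟫)
include hpos

lemma weightedEnergy_le {t : ℝ} (ht : 0 ≤ t) :
    weightedEnergy A t (W t) ≤ 6 * energyNormSq A (W 0) := by
  have hdecay := mul_add_le_of_hasDerivAt (fun τ => hW.hasDerivAt_energy hA)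
    (fun τ => hW.hasDerivAt_energyNormSq hA) (fun τ => sq_nonneg ‖(W τ).2‖) ht
  have he := apply_le_apply_zero_of_hasDerivAt (fun τ => hW.hasDerivAt_energy hA)
    (fun τ _ => by nlinarith [sq_nonneg ‖(W τ).2‖]) ht
  have hg := apply_le_apply_zero_of_hasDerivAt (fun τ => hW.hasDerivAt_energyNormSq hA)
    (fun τ _ => neg_nonpos.2 (energy_nonneg hpos (W τ))) ht
  rw [weightedEnergy]
  nlinarith [sq_norm_fst_le_energyNormSq hpos (W t), energy_le_energyNormSq hpos (W 0),
    energyNormSq_nonneg hpos (W t)]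

lemma derivative_decay {t : ℝ} (ht : 0 ≤ t) :
    (1 + t) ^ 2 * weightedEnergy A t (L A (W t)) ≤
      96 * (energyNormSq A (W 0) + energyNormSq A (L A (W 0))) := by
  have key := cube_mul_add_le_of_hasDerivAt (fun τ => hW.hasDerivAt_energy hA)
    (fun τ => hW.hasDerivAt_energyNormSq hA) (fun τ => hW.map_L.hasDerivAt_energy hA)
    (fun τ => hW.map_L.hasDerivAt_energyNormSq hA) (fun τ => sq_nonneg _)
    (fun τ => energy_nonneg hpos _) (fun τ => energyNormSq_nonneg hpos _)
    (fun τ => energyNormSq_nonneg hpos _) (fun τ => energyNormSq_le_energy hpos _) ht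
  have hp := sq_norm_fst_le_energyNormSq hpos (L A (W t))
  have he₁ := energy_le_energyNormSq hpos (L A (W t))
  have he₁_nonneg := energy_nonneg hpos (L A (W t))
  have hcube : (1 + t) ^ 3 ≤ 4 * (1 + t ^ 3) := by nlinarith [sq_nonneg (t - 1)]
  have hsq : (1 + t) ^ 2 ≤ 2 * (1 + t ^ 2) := by nlinarith [sq_nonneg (t - 1)]
  rw [weightedEnergy]
  nlinarith [mul_le_mul_of_nonneg_right hcube he₁_nonneg,
    mul_le_mul_of_nonneg_right hsq (sq_nonneg ‖(L A (W t)).1‖),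
    energy_le_energyNormSq hpos (W 0), energyNormSq_nonneg hpos (W 0),
    energyNormSq_nonneg hpos (L A (W t)),
    mul_nonneg (sq_nonneg t) (energyNormSq_nonneg hpos (L A (W t)))]

end IsSolution

def decayConst : ℕ → ℝ
  | 0 => 6
  | n + 1 => 768 * 4 ^ (n + 1) * decayConst n

lemma decayConst_pos : ∀ n, 0 < decayConst n
  | 0 => by norm_num [decayConst]
  | n + 1 => by have := decayConst_pos n; rw [decayConst]; positivity

theorem IsSolution.decay (hA : (A : H →ₗ[ℝ] H).IsSymmetric) (hpos : ∀ x : H, 0 ≤ ⟪A x, x⟫)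
    (n : ℕ) {W : ℝ → H × H} (hW : IsSolution A W) {t : ℝ} (ht : 0 ≤ t) :
    (1 + t) ^ (2 * n) * weightedEnergy A t ((L A ^ n) (W t)) ≤
      decayConst n * graphNormSq A n (W 0) := by
  induction n generalizing W t with
  | zero => simpa [decayConst, graphNormSq] using hW.weightedEnergy_le hA hpos ht
  | succ n ih =>
    obtain ⟨s, hs, rfl⟩ : ∃ s, 0 ≤ s ∧ t = s + s := ⟨t / 2, by positivity, by ring⟩
    have hC := decayConst_pos n
    have hdata : ∀ q B, (1 + s) ^ (2 * n) * weightedEnergy A s q ≤ B →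
        (1 + s) ^ (2 * n) * energyNormSq A q ≤ 2 * B := fun q B h => by
      nlinarith [energyNormSq_le_two_mul_weightedEnergy hpos q hs,
        pow_nonneg (by linarith : (0 : ℝ) ≤ 1 + s) (2 * n)]
    have h₀ := hdata _ _ ((ih hW hs).trans (mul_le_mul_of_nonneg_left
      (graphNormSq_le_succ hpos (W 0) n) hC.le))
    have h₁ := hdata _ _ ((ih hW.map_L hs).trans (mul_le_mul_of_nonneg_left
      (graphNormSq_L_le hpos (W 0) n) hC.le))
    rw [← L_pow_succ_apply', L_pow_succ_apply] at h₁
    have hmid := ((hW.comp_const_add hs).map_pow n).derivative_decay hA hpos hs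
    rw [add_zero] at hmid
    rw [L_pow_succ_apply, decayConst]
    set q := L A ((L A ^ n) (W (s + s)))
    have hq := energy_nonneg hpos q
    have hweight : weightedEnergy A (s + s) q ≤ 2 * weightedEnergy A s q := by
      unfold weightedEnergy
      nlinarith [sq_nonneg ‖q.1‖]
    have hpow : (1 + (s + s)) ^ (2 * (n + 1)) ≤ 4 ^ (n + 1) * ((1 + s) ^ (2 * n) * (1 + s) ^ 2) :=
      calc (1 + (s + s)) ^ (2 * (n + 1)) = ((1 + (s + s)) ^ 2) ^ (n + 1) := pow_mul _ _ _
        _ ≤ (4 * (1 + s) ^ 2) ^ (n + 1) := pow_le_pow_left₀ (by positivity) (by nlinarith) _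
        _ = 4 ^ (n + 1) * (1 + s) ^ (2 * (n + 1)) := by rw [mul_pow, ← pow_mul]
        _ = 4 ^ (n + 1) * ((1 + s) ^ (2 * n) * (1 + s) ^ 2) := by ring
    calc (1 + (s + s)) ^ (2 * (n + 1)) * weightedEnergy A (s + s) q
        ≤ 4 ^ (n + 1) * ((1 + s) ^ (2 * n) * (1 + s) ^ 2) * (2 * weightedEnergy A s q) :=
          mul_le_mul hpow hweight (add_nonneg (sq_nonneg _) (by positivity)) (by positivity)
      _ = 2 * 4 ^ (n + 1) * ((1 + s) ^ (2 * n) * ((1 + s) ^ 2 * weightedEnergy A s q)) := by ring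
      _ ≤ 2 * 4 ^ (n + 1) * ((1 + s) ^ (2 * n) * (96 * (energyNormSq A ((L A ^ n) (W s))
            + energyNormSq A (L A ((L A ^ n) (W s)))))) := by gcongr
      _ = 192 * 4 ^ (n + 1) * ((1 + s) ^ (2 * n) * energyNormSq A ((L A ^ n) (W s))
            + (1 + s) ^ (2 * n) * energyNormSq A (L A ((L A ^ n) (W s)))) := by ring
      _ ≤ 192 * 4 ^ (n + 1) * (2 * (decayConst n * graphNormSq A (n + 1) (W 0))
            + 2 * (decayConst n * graphNormSq A (n + 1) (W 0))) := by gcongr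
      _ = 768 * 4 ^ (n + 1) * decayConst n * graphNormSq A (n + 1) (W 0) := by ring

end DampedWave

end

open DampedWave in
theorem stmt_6 :
    ∀ n : ℕ, ∃ C : ℝ, 0 < C ∧
      ∀ (H : Type u) [NormedAddCommGroup H] [InnerProductSpace ℝ H] [CompleteSpace H]
        (A : H →L[ℝ] H), IsSelfAdjoint A → (∀ x : H, 0 ≤ ⟪A x, x⟫) →
        ∀ (u : ℝ → H) (u0 u1 : H), ContDiff ℝ 2 u →
          (∀ t ≥ (0:ℝ), deriv (deriv u) t + A (u t) + deriv u t = 0) →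
          u 0 = u0 → deriv u 0 = u1 →
          ∀ t ≥ (0:ℝ),
            ‖iteratedDeriv n u t‖ ^ 2
                + (1 + t) * (‖deriv (iteratedDeriv n u) t‖ ^ 2
                    + ⟪A (iteratedDeriv n u t), iteratedDeriv n u t⟫)
              ≤ C * (1 + t) ^ (-(2 * (n : ℝ))) *
                  ∑ k ∈ Finset.range (n + 1),
                    (fun p : H × H =>
                        ⟪A p.1, p.1⟫ + (1 / 4) * ‖p.1‖ ^ 2
                          + ‖p.2 + (1 / 2 : ℝ) • p.1‖ ^ 2)
                      ((fun p : H × H => (p.2, -A p.1 - p.2))^[k] (u0, u1)) := by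
  intro n
  refine ⟨decayConst n, decayConst_pos n, ?_⟩
  intro H _ _ _ A hA hpos u u0 u1 hu heq hu0 hu1 t ht
  subst hu0 hu1
  have hW := isSolution_of_contDiff hu heq
  have hlhs : weightedEnergy A t (iteratedDeriv n u t, deriv (iteratedDeriv n u) t) ≤
      weightedEnergy A t ((L A ^ n) (u t, deriv u t)) := by
    refine weightedEnergy_le_of_eq_or_eq_zero hpos ht (hW.iteratedDeriv_fst_eq_or ht) ?_
    rw [← iteratedDeriv_succ]
    have h := hW.iteratedDeriv_fst_eq_or (k := n + 1) ht
    rwa [L_pow_succ_apply] at h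
  have hdecay := hW.decay hA.isSymmetric hpos n ht
  have hsum : graphNormSq A n (u 0, deriv u 0) = ∑ k ∈ Finset.range (n + 1),
      energyNormSq A ((fun p : H × H => (p.2, -A p.1 - p.2))^[k] (u 0, deriv u 0)) := by
    simp only [graphNormSq, FunLike.coe_pow_eq_iterate, coe_L]
  have hpow : (1 + t) ^ (-(2 * (n : ℝ))) = ((1 + t) ^ (2 * n))⁻¹ := by
    rw [Real.rpow_neg (by positivity), ← Real.rpow_natCast]
    push_cast
    rfl
  calc _ ≤ weightedEnergy A t ((L A ^ n) (u t, deriv u t)) := hlhs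
    _ ≤ decayConst n * graphNormSq A n (u 0, deriv u 0) / (1 + t) ^ (2 * n) := by
      rw [le_div_iff₀ (by positivity), mul_comm]
      exact hdecay
    _ = _ := by rw [hpow, hsum, div_eq_mul_inv, mul_right_comm]; rfl
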